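/- If S is a nearly epsilon-strongly G-graded ring and M is a graded left S-module, then for all g, h ∈ G the multiplication map m_{g,h}: S_g ⊗_R M_h → (S_g S_{g⁻¹}) M_{gh}, s ⊗ m ↦ sm, is an isomorphism of left R-modules, where R = S_e. -/

import Mathlib

/-!
Write `I = S_g S_{g⁻¹}`. The image of `s ⊗ m` lies in `I M_{gh}` because `s = u s` for some
`u ∈ I`, and every `p q n` with `p ∈ S_g`, `q ∈ S_{g⁻¹}`, `n ∈ M_{gh}` is the image of
`p ⊗ q n`. For injectivity, finitely many `s_i ∈ S_g` have a common left unit `u ∈ I`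
(s-unitality, together with `I I ⊆ I`); writing `u = ∑ p_j q_j` and using `q_j s_i ∈ R`,
`∑ s_i ⊗ m_i = ∑ u s_i ⊗ m_i = ∑_j p_j ⊗ q_j (∑ s_i m_i)`, which vanishes with `∑ s_i m_i`.
-/

open Pointwise

section Defs

variable {G : Type} [AddGroup G] [DecidableEq G]
variable {A : Type} [Ring A]
variable {M : Type} [AddCommGroup M] [Module A M]

/-- The additive subgroup of `M` consisting of finite sums of products `a • m`
with `a ∈ S` and `m ∈ N`. -/
def prodSMul (S : AddSubgroup A) (N : AddSubgroup M) : AddSubgroup M where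
  __ := S.toAddSubmonoid • N.toAddSubmonoid
  neg_mem' {x} hx := by
    refine AddSubmonoid.smul_induction_on hx (fun a ha m hm => ?_) (fun x y hx hy => ?_)
    · rw [show -(a • m) = (-a) • m by rw [neg_smul]]
      exact AddSubmonoid.smul_mem_smul (S.neg_mem ha) hm
    · rw [neg_add]
      exact (S.toAddSubmonoid • N.toAddSubmonoid).add_mem hx hy

/-- A (possibly non-unital) ring, here an additive subgroup of `A` closed under
multiplication, is *s-unital* if every element has a left and a right local unit in it. -/
def IsSUnitalSub (I : AddSubgroup A) : Prop :=
  ∀ a ∈ I, ∃ u ∈ I, ∃ v ∈ I, u * a = a ∧ a * v = a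

variable (𝒜 : G → AddSubgroup A)

/-- `S` is symmetrically graded if `S_g S_{g⁻¹} S_g = S_g` for all `g`. -/
def IsSymmetricallyGraded : Prop := ∀ g : G, 𝒜 g * 𝒜 (-g) * 𝒜 g = 𝒜 g

/-- `S` is nearly epsilon-strongly graded if each `S_g` is an s-unital
`(S_g S_{g⁻¹}, S_{g⁻¹} S_g)`-bimodule: for every `s ∈ S_g` there are
`u ∈ S_g S_{g⁻¹}` and `v ∈ S_{g⁻¹} S_g` with `u s = s = s v`. -/
def IsNearlyEpsilonStrong : Prop :=
  ∀ g : G, ∀ s ∈ 𝒜 g, ∃ u ∈ 𝒜 g * 𝒜 (-g), ∃ v ∈ 𝒜 (-g) * 𝒜 g, u * s = s ∧ s * v = s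


section Stmt5

open scoped TensorProduct

variable {G : Type} [AddGroup G] [DecidableEq G]
variable {A : Type} [Ring A] (𝒜 : G → AddSubgroup A) [GradedRing 𝒜]
variable {M : Type} [AddCommGroup M] [Module A M]
variable (ℳ : G → AddSubgroup M) [SetLike.GradedSMul 𝒜 ℳ] [DirectSum.Decomposition ℳ]

/-- The submodule of balanced relations defining the tensor product
`S_g ⊗_R M_h` over `R = S_e` as a quotient of `S_g ⊗_ℤ M_h`. -/
def balancedRel (g h : G) : Submodule ℤ (↥(𝒜 g) ⊗[ℤ] ↥(ℳ h)) :=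
  Submodule.span ℤ
    { x | ∃ (s : ↥(𝒜 g)) (r : ↥(𝒜 0)) (m : ↥(ℳ h)),
        x = (⟨s.1 * r.1, by
              have := SetLike.mul_mem_graded s.2 r.2; rwa [add_zero] at this⟩ :
            ↥(𝒜 g)) ⊗ₜ[ℤ] m
          - s ⊗ₜ[ℤ] (⟨r.1 • m.1, by
              have := SetLike.GradedSMul.smul_mem r.2 m.2; rwa [zero_vadd] at this⟩ :
            ↥(ℳ h)) }

/-- The tensor product `S_g ⊗_R M_h` over `R = S_e`, realized as a quotient of the
tensor product over `ℤ` by the balanced relations. -/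
def tensorOverR (g h : G) :=
  (↥(𝒜 g) ⊗[ℤ] ↥(ℳ h)) ⧸ balancedRel 𝒜 ℳ g h

noncomputable instance (g h : G) : AddCommGroup (tensorOverR 𝒜 ℳ g h) :=
  inferInstanceAs (AddCommGroup ((↥(𝒜 g) ⊗[ℤ] ↥(ℳ h)) ⧸ balancedRel 𝒜 ℳ g h))

noncomputable instance (g h : G) : Module ℤ (tensorOverR 𝒜 ℳ g h) :=
  inferInstanceAs (Module ℤ ((↥(𝒜 g) ⊗[ℤ] ↥(ℳ h)) ⧸ balancedRel 𝒜 ℳ g h))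

section LocalUnits

variable {R X : Type*} [Ring R] [AddCommGroup X] [Module R X]

theorem AddSubgroup.exists_common_left_unit {I : AddSubgroup R} {N : AddSubgroup X}
    (hI : ∀ a ∈ I, ∀ b ∈ I, a * b ∈ I) (hIN : ∀ a ∈ I, ∀ x ∈ N, a • x ∈ N)
    (hN : ∀ x ∈ N, ∃ u ∈ I, u • x = x) (F : Finset X) (hF : ↑F ⊆ (N : Set X)) :
    ∃ u ∈ I, ∀ x ∈ F, u • x = x := by
  classical
  induction F using Finset.induction_on with
  | empty => exact ⟨0, zero_mem I, by simp⟩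
  | insert y F _ ih =>
    rw [Finset.coe_insert, Set.insert_subset_iff] at hF
    obtain ⟨u, hu, hFu⟩ := ih hF.2
    obtain ⟨v, hv, hyv⟩ := hN (y - u • y) (sub_mem hF.1 (hIN u hu y hF.1))
    -- `v` repairs `u` at `y` and, acting only through `x - u • x`, leaves it intact on `F`.
    have key : ∀ x : X, (u + v - v * u) • x = u • x + v • (x - u • x) := fun x => by
      rw [sub_smul, add_smul, mul_smul, smul_sub]; abel
    refine ⟨u + v - v * u, sub_mem (add_mem hu hv) (hI v hv u hu), fun x hx => ?_⟩
    rcases Finset.mem_insert.1 hx with rfl | hx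
    · rw [key, hyv, add_sub_cancel]
    · rw [key, hFu x hx, sub_self, smul_zero, add_zero]

end LocalUnits

section TensorSMul

variable {A M : Type*} [Ring A] [AddCommGroup M] [Module A M]

def AddSubgroup.tensorSMul (S : AddSubgroup A) (N : AddSubgroup M) : S ⊗[ℤ] N →ₗ[ℤ] M :=
  TensorProduct.lift <| LinearMap.mk₂ ℤ (fun s m => (s : A) • (m : M)) (fun _ _ _ => add_smul ..)
    (fun _ _ _ => smul_assoc ..) (fun _ _ _ => smul_add ..) (fun _ _ _ => (smul_comm ..).symm)

@[simp]
theorem AddSubgroup.tensorSMul_tmul (S : AddSubgroup A) (N : AddSubgroup M) (s : S) (m : N) :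
    S.tensorSMul N (s ⊗ₜ m) = (s : A) • (m : M) :=
  rfl

end TensorSMul

section GradedMul

variable {G A : Type*} [AddGroup G] [Ring A] {𝒜 : G → AddSubgroup A} [SetLike.GradedMul 𝒜]

theorem SetLike.mul_mem_graded_of_add_eq {i j k : G} (hk : i + j = k) {a b : A}
    (ha : a ∈ 𝒜 i) (hb : b ∈ 𝒜 j) : a * b ∈ 𝒜 k :=
  hk ▸ SetLike.mul_mem_graded ha hb

theorem mul_mem_graded_of_mem_mul_neg {g : G} {u s : A} (hu : u ∈ 𝒜 g * 𝒜 (-g))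
    (hs : s ∈ 𝒜 g) : u * s ∈ 𝒜 g := by
  refine AddSubmonoid.mul_induction_on hu (fun p hp q hq => ?_) fun a b ha hb => ?_
  · rw [mul_assoc]
    exact SetLike.mul_mem_graded_of_add_eq (add_zero g) hp
      (SetLike.mul_mem_graded_of_add_eq (neg_add_cancel g) hq hs)
  · rw [add_mul]
    exact add_mem ha hb

theorem mul_mem_mul_neg {g : G} {u v : A} (hu : u ∈ 𝒜 g * 𝒜 (-g)) (hv : v ∈ 𝒜 g * 𝒜 (-g)) :
    u * v ∈ 𝒜 g * 𝒜 (-g) := by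
  refine AddSubmonoid.mul_induction_on hv (fun p hp q hq => ?_) fun a b ha hb => ?_
  · rw [← mul_assoc]
    exact AddSubmonoid.mul_mem_mul (mul_mem_graded_of_mem_mul_neg hu hp) hq
  · rw [mul_add]
    exact add_mem ha hb

end GradedMul

theorem SetLike.smul_mem_graded_of_add_eq {G A M : Type*} [AddGroup G] [Ring A] [AddCommGroup M]
    [Module A M] {𝒜 : G → AddSubgroup A} {ℳ : G → AddSubgroup M} [SetLike.GradedSMul 𝒜 ℳ]
    {i j k : G} (hk : i + j = k) {a : A} {m : M} (ha : a ∈ 𝒜 i) (hm : m ∈ ℳ j) : a • m ∈ ℳ k :=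
  hk ▸ SetLike.GradedSMul.smul_mem ha hm

theorem IsNearlyEpsilonStrong.exists_common_left_unit {G A : Type} [AddGroup G] [Ring A]
    {𝒜 : G → AddSubgroup A} [SetLike.GradedMul 𝒜] (hS : IsNearlyEpsilonStrong 𝒜) (g : G)
    (F : Finset A) (hF : ↑F ⊆ (𝒜 g : Set A)) : ∃ u ∈ 𝒜 g * 𝒜 (-g), ∀ s ∈ F, u * s = s :=
  AddSubgroup.exists_common_left_unit (fun _ hu _ hv => mul_mem_mul_neg hu hv)
    (fun _ hu _ hs => mul_mem_graded_of_mem_mul_neg hu hs)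
    (fun s hs => (hS g s hs).imp fun _ ⟨hu, _, _, hus, _⟩ => ⟨hu, hus⟩) F hF

theorem range_tensorSMul {G A M : Type} [AddGroup G] [Ring A] [AddCommGroup M] [Module A M]
    {𝒜 : G → AddSubgroup A} {ℳ : G → AddSubgroup M} [SetLike.GradedSMul 𝒜 ℳ]
    (hS : IsNearlyEpsilonStrong 𝒜) (g h : G) :
    LinearMap.range ((𝒜 g).tensorSMul (ℳ h)) =
      (prodSMul (𝒜 g * 𝒜 (-g)) (ℳ (g + h))).toIntSubmodule := by
  apply le_antisymm
  · rintro _ ⟨t, rfl⟩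
    induction t with
    | zero => exact zero_mem _
    | tmul s m =>
      obtain ⟨u, hu, -, -, hus, -⟩ := hS g s s.2
      rw [AddSubgroup.tensorSMul_tmul, ← hus, mul_smul]
      exact AddSubmonoid.smul_mem_smul hu (SetLike.smul_mem_graded_of_add_eq rfl s.2 m.2)
    | add x y hx hy =>
      rw [map_add]
      exact add_mem hx hy
  · intro x hx
    refine AddSubmonoid.smul_induction_on hx (fun a ha n hn => ?_) fun _ _ => add_mem
    refine AddSubmonoid.mul_induction_on ha (fun p hp q hq => ?_) fun _ _ => ?_
    · have hqn := SetLike.smul_mem_graded_of_add_eq (neg_add_cancel_left g h) hq hn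
      exact ⟨⟨p, hp⟩ ⊗ₜ ⟨q • n, hqn⟩, by rw [AddSubgroup.tensorSMul_tmul, mul_smul]⟩
    · rw [add_smul]
      exact add_mem

section MultiplicationMap

variable {G : Type} [AddGroup G] [DecidableEq G] {A : Type} [Ring A] {𝒜 : G → AddSubgroup A}
  [GradedRing 𝒜] {M : Type} [AddCommGroup M] [Module A M] {ℳ : G → AddSubgroup M}
  [SetLike.GradedSMul 𝒜 ℳ]

theorem balancedRel_le_ker_tensorSMul {g h : G} :
    balancedRel 𝒜 ℳ g h ≤ LinearMap.ker ((𝒜 g).tensorSMul (ℳ h)) := by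
  rw [balancedRel, Submodule.span_le]
  rintro _ ⟨s, r, m, rfl⟩
  simp [mul_smul]

variable (𝒜 ℳ) in
noncomputable def multiplicationMap (g h : G) : tensorOverR 𝒜 ℳ g h →ₗ[ℤ] M :=
  (balancedRel 𝒜 ℳ g h).liftQ ((𝒜 g).tensorSMul (ℳ h)) balancedRel_le_ker_tensorSMul

@[simp]
theorem multiplicationMap_mk {g h : G} (t : 𝒜 g ⊗[ℤ] ℳ h) :
    multiplicationMap 𝒜 ℳ g h (Submodule.Quotient.mk t) = (𝒜 g).tensorSMul (ℳ h) t :=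
  rfl

theorem range_multiplicationMap (hS : IsNearlyEpsilonStrong 𝒜) (g h : G) :
    LinearMap.range (multiplicationMap 𝒜 ℳ g h) =
      (prodSMul (𝒜 g * 𝒜 (-g)) (ℳ (g + h))).toIntSubmodule :=
  (Submodule.range_liftQ _ _ _).trans (range_tensorSMul hS g h)

theorem mk_mul_tmul_eq_mk_tmul_smul {g h : G} {s r : A} {m : M} (hs : s ∈ 𝒜 g) (hr : r ∈ 𝒜 0)
    (hm : m ∈ ℳ h) :
    (Submodule.Quotient.mk ((⟨s * r, SetLike.mul_mem_graded_of_add_eq (add_zero g) hs hr⟩ : 𝒜 g)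
        ⊗ₜ[ℤ] (⟨m, hm⟩ : ℳ h)) : (𝒜 g ⊗[ℤ] ℳ h) ⧸ balancedRel 𝒜 ℳ g h) =
      Submodule.Quotient.mk ((⟨s, hs⟩ : 𝒜 g) ⊗ₜ[ℤ]
        (⟨r • m, SetLike.smul_mem_graded_of_add_eq (zero_add h) hr hm⟩ : ℳ h)) :=
  (Submodule.Quotient.eq _).2 (Submodule.subset_span ⟨⟨s, hs⟩, ⟨r, hr⟩, ⟨m, hm⟩, rfl⟩)

theorem exists_addMonoidHom_mk_mul_tmul {g h : G} {u : A} (hu : u ∈ 𝒜 g * 𝒜 (-g)) :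
    ∃ ψ : ℳ (g + h) →+ (𝒜 g ⊗[ℤ] ℳ h) ⧸ balancedRel 𝒜 ℳ g h, ∀ (s : 𝒜 g) (m : ℳ h),
      Submodule.Quotient.mk ((⟨u * s, mul_mem_graded_of_mem_mul_neg hu s.2⟩ : 𝒜 g) ⊗ₜ[ℤ] m) =
        ψ ⟨(s : A) • (m : M), SetLike.smul_mem_graded_of_add_eq rfl s.2 m.2⟩ := by
  -- The membership is carried along because the motive of the induction cannot mention `hu`.
  suffices ∃ hu : u ∈ 𝒜 g * 𝒜 (-g), ∃ ψ : ℳ (g + h) →+ (𝒜 g ⊗[ℤ] ℳ h) ⧸ balancedRel 𝒜 ℳ g h,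
      ∀ (s : 𝒜 g) (m : ℳ h),
        Submodule.Quotient.mk ((⟨u * s, mul_mem_graded_of_mem_mul_neg hu s.2⟩ : 𝒜 g) ⊗ₜ[ℤ] m) =
          ψ ⟨(s : A) • (m : M), SetLike.smul_mem_graded_of_add_eq rfl s.2 m.2⟩ from this.2
  refine AddSubmonoid.mul_induction_on hu (fun p hp q hq => ⟨AddSubmonoid.mul_mem_mul hp hq, ?_⟩)
    fun u v ⟨hu, ψ, hψ⟩ ⟨hv, φ, hφ⟩ => ⟨add_mem hu hv, ψ + φ, fun s m => ?_⟩
  · refine ⟨AddMonoidHom.mk' (fun n => Submodule.Quotient.mk ((⟨p, hp⟩ : 𝒜 g) ⊗ₜ[ℤ]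
      (⟨q • (n : M), SetLike.smul_mem_graded_of_add_eq (neg_add_cancel_left g h) hq n.2⟩ : ℳ h)))
      fun n n' => ?_, fun s m => ?_⟩
    · rw [← Submodule.Quotient.mk_add, ← TensorProduct.tmul_add]
      congr 2
      exact Subtype.ext (smul_add ..)
    · have hqs := SetLike.mul_mem_graded_of_add_eq (neg_add_cancel g) hq s.2
      have hassoc : (⟨p * q * s, mul_mem_graded_of_mem_mul_neg (AddSubmonoid.mul_mem_mul hp hq) s.2⟩
          : 𝒜 g) = ⟨p * (q * s), SetLike.mul_mem_graded_of_add_eq (add_zero g) hp hqs⟩ :=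
        Subtype.ext (mul_assoc ..)
      rw [hassoc, mk_mul_tmul_eq_mk_tmul_smul hp hqs m.2]
      congr 2
      exact Subtype.ext (mul_smul ..)
  · rw [AddMonoidHom.add_apply, ← hψ, ← hφ, ← Submodule.Quotient.mk_add, ← TensorProduct.add_tmul]
    congr 2
    exact Subtype.ext (add_mul ..)

theorem multiplicationMap_injective (hS : IsNearlyEpsilonStrong 𝒜) (g h : G) :
    Function.Injective (multiplicationMap 𝒜 ℳ g h) := by
  classical
  refine (injective_iff_map_eq_zero _).2 fun x hx => ?_
  obtain ⟨t, rfl⟩ := Submodule.Quotient.mk_surjective _ x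
  obtain ⟨F, rfl⟩ := TensorProduct.exists_finset t
  obtain ⟨u, hu, hunit⟩ := hS.exists_common_left_unit g (F.image fun i => (i.1 : A))
    fun _ hs => by obtain ⟨i, -, rfl⟩ := Finset.mem_image.1 hs; exact i.1.2
  obtain ⟨ψ, hψ⟩ := exists_addMonoidHom_mk_mul_tmul (ℳ := ℳ) (h := h) hu
  let sm (i : 𝒜 g × ℳ h) : ℳ (g + h) :=
    ⟨(i.1 : A) • (i.2 : M), SetLike.smul_mem_graded_of_add_eq rfl i.1.2 i.2.2⟩
  have hsum : ∑ i ∈ F, sm i = 0 := by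
    ext
    simpa [sm] using hx
  calc _ = ∑ i ∈ F, ψ (sm i) := by
        rw [← Submodule.mkQ_apply, map_sum]
        refine Finset.sum_congr rfl fun i hi => ?_
        rw [Submodule.mkQ_apply, ← hψ]
        congr 2
        exact Subtype.ext (hunit _ (Finset.mem_image_of_mem _ hi)).symm
    _ = 0 := by rw [← map_sum, hsum, map_zero]

end MultiplicationMap

theorem multiplication_map_isomorphism_of_nearlyEpsilonStrong
    (hS : IsNearlyEpsilonStrong 𝒜) (g h : G) :
    ∃ e : tensorOverR 𝒜 ℳ g h ≃ₗ[ℤ] ↥(prodSMul (𝒜 g * 𝒜 (-g)) (ℳ (g + h))),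
      ∀ (s : ↥(𝒜 g)) (m : ↥(ℳ h)),
        ((e (Submodule.Quotient.mk (s ⊗ₜ[ℤ] m)) :
            ↥(prodSMul (𝒜 g * 𝒜 (-g)) (ℳ (g + h)))) : M) = s.1 • m.1 :=
  ⟨(LinearEquiv.ofInjective _ (multiplicationMap_injective hS g h)).trans
    (LinearEquiv.ofEq _ _ (range_multiplicationMap hS g h)), fun _ _ => rfl⟩

end Stmt5
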